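/- Let h be a measuring function, t₁ > 0, and define h̄(t) = t^d·h(t₁)/t₁^d for 0 ≤ t < t₁ and h̄(t) = h(t) for t ≥ t₁. Let α ∈ (0,1), and suppose F, G ⊆ ℝ^d are such that B(x, α t₁) ⊆ G for every x ∈ F. Then M_h(F) ≤ C(α,d) · M_{h̄}(G). -/

import Mathlib

open MeasureTheory Set

/-- A measuring (gauge) function: continuous, strictly increasing, vanishing at 0,
tending to infinity, with `h(r)/r^d` non-increasing on `(0,∞)`. -/
structure Measuring (d : ℕ) (h : ℝ → ℝ) : Prop where
  cont : ContinuousOn h (Set.Ici 0)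
  mono : StrictMonoOn h (Set.Ici 0)
  zero : h 0 = 0
  tendsto : Filter.Tendsto h Filter.atTop Filter.atTop
  ratio : ∀ r₁ r₂ : ℝ, 0 < r₁ → r₁ ≤ r₂ → h r₂ / r₂ ^ (d : ℝ) ≤ h r₁ / r₁ ^ (d : ℝ)


/-- Hausdorff content with gauge `g`. -/
noncomputable def hContent (d : ℕ) (g : ℝ → ℝ) (G : Set (EuclideanSpace ℝ (Fin d))) : ENNReal :=
  ⨅ (c : ℕ → EuclideanSpace ℝ (Fin d)) (r : ℕ → ℝ)
    (_ : G ⊆ ⋃ n, Metric.ball (c n) (r n)), ∑' n, ENNReal.ofReal (g (r n))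

/-- The modified gauge `h̄`: equal to `t^d h(t₁)/t₁^d` for `t < t₁` and to `h` afterwards. -/
noncomputable def hbar (d : ℕ) (h : ℝ → ℝ) (t₁ : ℝ) (t : ℝ) : ℝ :=
  if t < t₁ then t ^ d * h t₁ / t₁ ^ d else h t

/-!
Fix a cover of `G` by balls `B(c n, r n)` and put `ρ = α t₁`. The points of `F` lying in some
enlarged ball `B(c n, r n + ρ)` with `r n ≥ ρ` are covered by these, at `h`-cost at most
`(2/α)^d h̄(r n)` by the doubling property. The remaining points admit a maximal `ρ`-separated
subset `T`; for `t ∈ T` the ball `B(t, ρ) ⊆ G` meets only small balls (`r n < ρ`), and the balls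
`B(t, ρ/2)` are disjoint, so comparing volumes gives `#T (ρ/2)^d ≤ ∑_{r n < ρ} r n ^ d`. Covering
by `B(t, ρ)` then costs `#T h(ρ) ≤ (2/α)^d ∑_{r n < ρ} h(t₁) r n ^ d / t₁ ^ d`, which is exactly
what `h̄` charges for the small balls.
-/

open Metric Function
open scoped ENNReal

section Metric

variable {X : Type*} [PseudoMetricSpace X]

theorem exists_pairwise_le_dist_subset_biUnion_ball {ε : ℝ} (hε : 0 < ε) (A : Set X) :
    ∃ T ⊆ A, T.Pairwise (ε ≤ dist · ·) ∧ A ⊆ ⋃ t ∈ T, ball t ε := by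
  let U : SetRel X X := {p | dist p.1 p.2 < ε}
  have : U.IsRefl := ⟨fun x => by simpa [U] using hε⟩
  have : U.IsSymm := ⟨fun x y hxy => by simpa [U, dist_comm] using hxy⟩
  obtain ⟨T, hT⟩ := zorn_subset {N | N ⊆ A ∧ U.IsSeparated N} fun ch hch hchain =>
    ⟨⋃₀ ch, ⟨sUnion_subset fun N hN => (hch hN).1,
      hchain.pairwise_sUnion.2 fun N hN => (hch hN).2⟩, fun _ => subset_sUnion_of_mem⟩
  refine ⟨T, hT.prop.1, hT.prop.2.imp fun x y hxy => not_lt.1 hxy, fun x hx => ?_⟩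
  obtain ⟨t, ht, hxt⟩ := SetRel.IsCover.of_maximal_isSeparated hT hx
  exact mem_biUnion ht hxt

theorem Set.Pairwise.countable_of_le_dist [TopologicalSpace.SeparableSpace X] {ε : ℝ}
    (hε : 0 < ε) {T : Set X} (hT : T.Pairwise (ε ≤ dist · ·)) : T.Countable :=
  Set.PairwiseDisjoint.countable_of_isOpen (s := fun x => ball x (ε / 2))
    (fun x hx y hy hxy => ball_disjoint_ball (by linarith [hT hx hy hxy]))
    (fun _ _ => isOpen_ball) (fun _ _ => nonempty_ball.2 (half_pos hε))

theorem ball_subset_iUnion_ball_of_radius_lt {ι : Type*} {c : ι → X} {r : ι → ℝ} {x : X}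
    {ρ : ℝ} (hx : ball x ρ ⊆ ⋃ i, ball (c i) (r i))
    (hfar : ∀ i, ρ ≤ r i → x ∉ ball (c i) (r i + ρ)) :
    ball x ρ ⊆ ⋃ i : {i // r i < ρ}, ball (c i) (r i) := by
  intro y hy
  obtain ⟨i, hi⟩ := mem_iUnion.1 (hx hy)
  refine mem_iUnion.2 ⟨⟨i, lt_of_not_ge fun hρ => hfar i hρ ?_⟩, hi⟩
  rw [mem_ball] at hy hi ⊢
  linarith [dist_triangle x y (c i), dist_comm x y]

end Metric

theorem tsum_ofReal_pow_finrank_le {E : Type*} [NormedAddCommGroup E] [NormedSpace ℝ E]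
    [FiniteDimensional ℝ E] {ι κ : Type*} [Countable ι] [Countable κ] {x : ι → E} {s : ℝ}
    (hs : 0 < s) (hdisj : Pairwise (Disjoint on fun i => ball (x i) s)) (c : κ → E) (r : κ → ℝ)
    (hsub : ∀ i, ball (x i) s ⊆ ⋃ k, ball (c k) (r k)) :
    ∑' _ : ι, ENNReal.ofReal (s ^ Module.finrank ℝ E) ≤
      ∑' k, ENNReal.ofReal (r k ^ Module.finrank ℝ E) := by
  borelize E
  set μ : Measure E := Measure.addHaar
  have hvol (y : E) (ρ : ℝ) :
      μ (ball y ρ) ≤ ENNReal.ofReal (ρ ^ Module.finrank ℝ E) * μ (ball 0 1) := by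
    rcases lt_or_ge 0 ρ with hρ | hρ
    · exact (Measure.addHaar_ball_of_pos μ y hρ).le
    · simp [ball_eq_empty.2 hρ]
  have hμ₀ : μ (ball 0 1) ≠ 0 := (measure_ball_pos μ 0 one_pos).ne'
  have hμ : μ (ball 0 1) ≠ ∞ := measure_ball_lt_top.ne
  rw [← ENNReal.mul_le_mul_iff_left hμ₀ hμ, ← ENNReal.tsum_mul_right, ← ENNReal.tsum_mul_right]
  calc ∑' i, ENNReal.ofReal (s ^ Module.finrank ℝ E) * μ (ball 0 1)
      = ∑' i, μ (ball (x i) s) := by simp [Measure.addHaar_ball_of_pos μ _ hs]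
    _ = μ (⋃ i, ball (x i) s) := (measure_iUnion hdisj fun _ => measurableSet_ball).symm
    _ ≤ μ (⋃ k, ball (c k) (r k)) := measure_mono (iUnion_subset hsub)
    _ ≤ ∑' k, μ (ball (c k) (r k)) := measure_iUnion_le _
    _ ≤ _ := ENNReal.tsum_le_tsum fun k => hvol _ _

section Content

variable {d : ℕ}

theorem hContent_le_tsum {g : ℝ → ℝ} (hg : g 0 = 0) {F : Set (EuclideanSpace ℝ (Fin d))}
    {ι : Type*} [Countable ι] (c : ι → EuclideanSpace ℝ (Fin d)) (r : ι → ℝ)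
    (hcov : F ⊆ ⋃ i, ball (c i) (r i)) :
    hContent d g F ≤ ∑' i, ENNReal.ofReal (g (r i)) := by
  obtain ⟨e, he⟩ := Countable.exists_injective_nat ι
  have hcov' : F ⊆ ⋃ n, ball (e.extend c 0 n) (e.extend r 0 n) := by
    refine hcov.trans (iUnion_subset fun i => ?_)
    rw [← he.extend_apply c 0, ← he.extend_apply r 0]
    exact subset_iUnion (fun n => ball (e.extend c 0 n) (e.extend r 0 n)) (e i)
  refine (iInf₂_le _ _).trans ((iInf_le _ hcov').trans (le_of_eq ?_))
  simp_rw [apply_extend (fun t => ENNReal.ofReal (g t))]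
  simp only [comp_def, Pi.zero_apply, hg, ENNReal.ofReal_zero]
  exact tsum_extend_zero he _

theorem le_mul_hContent {g : ℝ → ℝ} {G : Set (EuclideanSpace ℝ (Fin d))} {a C : ℝ≥0∞}
    (hC₀ : C ≠ 0) (hC : C ≠ ∞)
    (h : ∀ (c : ℕ → EuclideanSpace ℝ (Fin d)) (r : ℕ → ℝ), G ⊆ ⋃ n, ball (c n) (r n) →
      a ≤ C * ∑' n, ENNReal.ofReal (g (r n))) :
    a ≤ C * hContent d g G := by
  simp only [hContent, ENNReal.mul_iInf_of_ne hC₀ hC]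
  exact le_iInf fun c => le_iInf fun r => le_iInf (h c r)

end Content

section Gauge

variable {d : ℕ} {h : ℝ → ℝ}

theorem Measuring.nonneg (hm : Measuring d h) {r : ℝ} (hr : 0 ≤ r) : 0 ≤ h r :=
  hm.zero ▸ hm.mono.monotoneOn self_mem_Ici hr hr

theorem Measuring.apply_le_apply (hm : Measuring d h) {a b : ℝ} (ha : 0 ≤ a) (hab : a ≤ b) :
    h a ≤ h b :=
  hm.mono.monotoneOn ha (ha.trans hab) hab

theorem Measuring.apply_two_mul_le (hm : Measuring d h) {r : ℝ} (hr : 0 < r) :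
    h (2 * r) ≤ 2 ^ d * h r := by
  have hratio := hm.ratio r (2 * r) hr (by linarith)
  rw [Real.mul_rpow zero_le_two hr.le, Real.rpow_natCast, Real.rpow_natCast,
    div_le_div_iff₀ (by positivity) (by positivity)] at hratio
  nlinarith [pow_pos hr d]

theorem hbar_of_lt {t₁ r : ℝ} (hr : r < t₁) : hbar d h t₁ r = h t₁ / t₁ ^ d * r ^ d := by
  rw [hbar, if_pos hr]
  ring

variable {α t₁ : ℝ}

theorem Measuring.apply_add_le_pow_mul_hbar (hm : Measuring d h) (hα0 : 0 < α) (hα1 : α < 1)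
    (ht₁ : 0 < t₁) {r : ℝ} (hr : α * t₁ ≤ r) :
    h (r + α * t₁) ≤ (2 / α) ^ d * hbar d h t₁ r := by
  have hr0 : 0 < r := (mul_pos hα0 ht₁).trans_le hr
  have henlarge : h (r + α * t₁) ≤ h (2 * r) := hm.apply_le_apply (by positivity) (by linarith)
  rcases lt_or_ge r t₁ with hrt | hrt
  · rw [hbar_of_lt hrt]
    have hpow : (α * t₁) ^ d ≤ r ^ d := pow_le_pow_left₀ (by positivity) hr d
    calc h (r + α * t₁) ≤ h (2 * t₁) :=
          henlarge.trans (hm.apply_le_apply (by positivity) (by linarith))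
      _ ≤ 2 ^ d * h t₁ := hm.apply_two_mul_le ht₁
      _ = (2 / α) ^ d * (h t₁ / t₁ ^ d * (α * t₁) ^ d) := by
          rw [div_pow, mul_pow]
          field_simp
      _ ≤ (2 / α) ^ d * (h t₁ / t₁ ^ d * r ^ d) := by
          have := hm.nonneg ht₁.le
          gcongr
  · rw [hbar, if_neg hrt.not_gt]
    have htwo : (2 : ℝ) ^ d ≤ (2 / α) ^ d :=
      pow_le_pow_left₀ zero_le_two ((le_div_iff₀ hα0).2 (by nlinarith)) d
    calc h (r + α * t₁) ≤ 2 ^ d * h r := henlarge.trans (hm.apply_two_mul_le hr0)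
      _ ≤ (2 / α) ^ d * h r := by
          have := hm.nonneg hr0.le
          gcongr

end Gauge

section Cover

variable {d : ℕ} {h : ℝ → ℝ} {α t₁ : ℝ} {c : ℕ → EuclideanSpace ℝ (Fin d)} {r : ℕ → ℝ}

theorem Measuring.tsum_le_of_pairwise_le_dist (hm : Measuring d h) (hα0 : 0 < α)
    (hα1 : α < 1) (ht₁ : 0 < t₁) {T : Set (EuclideanSpace ℝ (Fin d))} [Countable T]
    (hT : T.Pairwise (α * t₁ ≤ dist · ·))
    (hsub : ∀ t ∈ T, ball t (α * t₁) ⊆ ⋃ m : {n // r n < α * t₁}, ball (c m) (r m)) :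
    ∑' _ : T, ENNReal.ofReal (h (α * t₁)) ≤
      ENNReal.ofReal ((2 / α) ^ d) * ∑' n, ENNReal.ofReal (hbar d h t₁ (r n)) := by
  have hρ : 0 < α * t₁ := mul_pos hα0 ht₁
  have hdensity : 0 ≤ h t₁ / t₁ ^ d := div_nonneg (hm.nonneg ht₁.le) (by positivity)
  have hcount : ∑' _ : T, ENNReal.ofReal ((α * t₁ / 2) ^ d) ≤
      ∑' m : {n // r n < α * t₁}, ENNReal.ofReal (r m ^ d) := by
    simpa only [finrank_euclideanSpace_fin] using
      tsum_ofReal_pow_finrank_le (x := ((↑) : T → EuclideanSpace ℝ (Fin d))) (half_pos hρ)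
        (fun t s hts => ball_disjoint_ball (by linarith [hT t.2 s.2 (Subtype.coe_ne_coe.2 hts)]))
        (fun m : {n // r n < α * t₁} => c m) (fun m => r m)
        (fun t => (ball_subset_ball (half_le_self hρ.le)).trans (hsub t t.2))
  have hnet : h (α * t₁) ≤ (2 / α) ^ d * (h t₁ / t₁ ^ d) * (α * t₁ / 2) ^ d := by
    calc h (α * t₁) ≤ h t₁ := hm.apply_le_apply hρ.le (by nlinarith)
      _ = _ := by
          rw [div_pow, div_pow, mul_pow]
          field_simp
  calc ∑' _ : T, ENNReal.ofReal (h (α * t₁))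
      ≤ ∑' _ : T, ENNReal.ofReal ((2 / α) ^ d) * ENNReal.ofReal (h t₁ / t₁ ^ d) *
          ENNReal.ofReal ((α * t₁ / 2) ^ d) := ENNReal.tsum_le_tsum fun _ => by
        rw [← ENNReal.ofReal_mul (by positivity), ← ENNReal.ofReal_mul (by positivity)]
        exact ENNReal.ofReal_le_ofReal hnet
    _ = ENNReal.ofReal ((2 / α) ^ d) * ENNReal.ofReal (h t₁ / t₁ ^ d) *
          ∑' _ : T, ENNReal.ofReal ((α * t₁ / 2) ^ d) := ENNReal.tsum_mul_left
    _ ≤ ENNReal.ofReal ((2 / α) ^ d) * ENNReal.ofReal (h t₁ / t₁ ^ d) *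
          ∑' m : {n // r n < α * t₁}, ENNReal.ofReal (r m ^ d) := by gcongr
    _ = ENNReal.ofReal ((2 / α) ^ d) *
          ∑' m : {n // r n < α * t₁}, ENNReal.ofReal (hbar d h t₁ (r m)) := by
        rw [mul_assoc, ← ENNReal.tsum_mul_left]
        congr 1
        refine tsum_congr fun m => ?_
        rw [hbar_of_lt (m.2.trans (by nlinarith)), ENNReal.ofReal_mul hdensity]
    _ ≤ _ := by
        gcongr
        exact ENNReal.tsum_comp_le_tsum_of_injective Subtype.val_injective
          fun n => ENNReal.ofReal (hbar d h t₁ (r n))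

theorem Measuring.tsum_apply_add_le (hm : Measuring d h) (hα0 : 0 < α) (hα1 : α < 1)
    (ht₁ : 0 < t₁) :
    ∑' n : {n // α * t₁ ≤ r n}, ENNReal.ofReal (h (r n + α * t₁)) ≤
      ENNReal.ofReal ((2 / α) ^ d) * ∑' n, ENNReal.ofReal (hbar d h t₁ (r n)) :=
  calc _ ≤ ∑' n : {n // α * t₁ ≤ r n},
        ENNReal.ofReal ((2 / α) ^ d) * ENNReal.ofReal (hbar d h t₁ (r n)) :=
        ENNReal.tsum_le_tsum fun n => by
          rw [← ENNReal.ofReal_mul (by positivity)]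
          exact ENNReal.ofReal_le_ofReal (hm.apply_add_le_pow_mul_hbar hα0 hα1 ht₁ n.2)
    _ ≤ _ := by
        rw [ENNReal.tsum_mul_left]
        gcongr
        exact ENNReal.tsum_comp_le_tsum_of_injective Subtype.val_injective
          fun n => ENNReal.ofReal (hbar d h t₁ (r n))

theorem Measuring.hContent_le_of_subset_iUnion_ball (hm : Measuring d h) (hα0 : 0 < α)
    (hα1 : α < 1) (ht₁ : 0 < t₁) {F G : Set (EuclideanSpace ℝ (Fin d))}
    (hFG : ∀ x ∈ F, ball x (α * t₁) ⊆ G) (hcov : G ⊆ ⋃ n, ball (c n) (r n)) :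
    hContent d h F ≤
      2 * ENNReal.ofReal ((2 / α) ^ d) * ∑' n, ENNReal.ofReal (hbar d h t₁ (r n)) := by
  have hρ : 0 < α * t₁ := mul_pos hα0 ht₁
  obtain ⟨T, hTF, hTsep, hTcov⟩ := exists_pairwise_le_dist_subset_biUnion_ball hρ
    {x ∈ F | ∀ n, α * t₁ ≤ r n → x ∉ ball (c n) (r n + α * t₁)}
  have : Countable T := (hTsep.countable_of_le_dist hρ).to_subtype
  have hcovF : F ⊆ ⋃ i : T ⊕ {n // α * t₁ ≤ r n},
      ball (Sum.elim (↑) (fun n => c n) i)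
        (Sum.elim (fun _ => α * t₁) (fun n => r n + α * t₁) i) := by
    intro x hx
    by_cases hbig : ∃ n, α * t₁ ≤ r n ∧ x ∈ ball (c n) (r n + α * t₁)
    · obtain ⟨n, hn, hxn⟩ := hbig
      exact mem_iUnion.2 ⟨.inr ⟨n, hn⟩, hxn⟩
    · push Not at hbig
      obtain ⟨t, ht, hxt⟩ := mem_iUnion₂.1 (hTcov ⟨hx, hbig⟩)
      exact mem_iUnion.2 ⟨.inl ⟨t, ht⟩, hxt⟩
  have hnet := hm.tsum_le_of_pairwise_le_dist hα0 hα1 ht₁ hTsep fun t ht =>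
    ball_subset_iUnion_ball_of_radius_lt (fun y hy => hcov (hFG t (hTF ht).1 hy)) (hTF ht).2
  calc hContent d h F ≤ _ := hContent_le_tsum hm.zero _ _ hcovF
    _ = _ := ENNReal.summable.tsum_sum ENNReal.summable
    _ ≤ _ := add_le_add hnet (hm.tsum_apply_add_le hα0 hα1 ht₁)
    _ = _ := by ring

end Cover

theorem stmt9_general (d : ℕ) (α : ℝ) (hα0 : 0 < α) (hα1 : α < 1) :
    ∃ C : ℝ, 0 < C ∧ ∀ h : ℝ → ℝ, Measuring d h → ∀ t₁ : ℝ, 0 < t₁ →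
      ∀ F G : Set (EuclideanSpace ℝ (Fin d)),
        (∀ x ∈ F, Metric.ball x (α * t₁) ⊆ G) →
        hContent d h F ≤ ENNReal.ofReal C * hContent d (hbar d h t₁) G := by
  refine ⟨2 * (2 / α) ^ d, by positivity, fun h hm t₁ ht₁ F G hFG => ?_⟩
  refine le_mul_hContent (by simp; positivity) ENNReal.ofReal_ne_top fun c r hcov => ?_
  rw [ENNReal.ofReal_mul zero_le_two, ENNReal.ofReal_ofNat]
  exact hm.hContent_le_of_subset_iUnion_ball hα0 hα1 ht₁ hFG hcov

/-- If every point of `F` has its ball of radius `α·t₁` contained in `G`, then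
`M_h(F) ≤ C(α,d)·M_{h̄}(G)`. -/
theorem stmt9 (d : ℕ) (hd : 0 < d) (α : ℝ) (hα0 : 0 < α) (hα1 : α < 1) :
    ∃ C : ℝ, 0 < C ∧ ∀ h : ℝ → ℝ, Measuring d h → ∀ t₁ : ℝ, 0 < t₁ →
      ∀ F G : Set (EuclideanSpace ℝ (Fin d)),
        (∀ x ∈ F, Metric.ball x (α * t₁) ⊆ G) →
        hContent d h F ≤ ENNReal.ofReal C * hContent d (hbar d h t₁) G :=
  stmt9_general d α hα0 hα1
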